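/- arXiv:2506.21350 — 2 statements merged into one kernel-verified Lean document; each statement's English description precedes it below -/
import Mathlib

section
/- Let Γ be a group and (V, μ) an algebraic group over Γ, V ⊆ Γ^d. Suppose L_V acts by isometries on a metric space Y in such a way that the constants subgroup Γ ⊆ L_V has bounded orbits. Then there exists a constant K such that for all f ∈ L_V and all v ∈ V, the translation length satisfies ||ρ_v^*(f)||_Y ≤ K · ℓ(f), where ρ_v^*(f) = f ∘ ρ_v with ρ_v : V → V, x ↦ x ⊛ v, and ℓ is the length on L_V with respect to the coordinate functions X_1,…,X_d. -/
/-- The group of `Γ`-words in `d` variables: the free product `Γ ∗ F(x₁,…,x_d)`. -/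
abbrev GWord (Γ : Type) [Group Γ] (d : ℕ) : Type := Monoid.Coprod Γ (FreeGroup (Fin d))

/-- Evaluation of `Γ`-words at a point of `Γ^d`: the homomorphism which is the identity
on `Γ` and sends the `i`-th variable to `v i`. -/
def evalWord {Γ : Type} [Group Γ] {d : ℕ} (v : Fin d → Γ) : GWord Γ d →* Γ :=
  Monoid.Coprod.lift (MonoidHom.id Γ) (FreeGroup.lift v)

/-- The variety defined by a set `S` of `Γ`-words. -/
def varietyOf {Γ : Type} [Group Γ] {d : ℕ} (S : Set (GWord Γ d)) : Set (Fin d → Γ) :=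
  { v | ∀ w ∈ S, evalWord v w = 1 }

/-- A subset of `Γ^d` is a variety if it is the common zero set of a set of `Γ`-words. -/
def IsVariety {Γ : Type} [Group Γ] {d : ℕ} (V : Set (Fin d → Γ)) : Prop :=
  ∃ S : Set (GWord Γ d), V = varietyOf S

/-- The homomorphism sending a `Γ`-word to the function it defines on `V`. -/
def wordEval {Γ : Type} [Group Γ] {d : ℕ} (V : Set (Fin d → Γ)) : GWord Γ d →* (↥V → Γ) :=
  Pi.monoidHom fun v => evalWord (v : Fin d → Γ)

/-- The group `L_V` of word maps on `V`, as a subgroup of the group of all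
functions `V → Γ` (with pointwise multiplication). -/
def LV {Γ : Type} [Group Γ] {d : ℕ} (V : Set (Fin d → Γ)) : Subgroup (↥V → Γ) :=
  (wordEval V).range

/-- The constant functions, as a homomorphism `Γ →* L_V`. -/
def LV.const {Γ : Type} [Group Γ] {d : ℕ} (V : Set (Fin d → Γ)) : Γ →* ↥(LV V) :=
  (wordEval V).rangeRestrict.comp Monoid.Coprod.inl

/-- The `i`-th coordinate function, an element of `L_V`. -/
def LV.coord {Γ : Type} [Group Γ] {d : ℕ} (V : Set (Fin d → Γ)) (i : Fin d) : ↥(LV V) :=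
  (wordEval V).rangeRestrict (Monoid.Coprod.inr (FreeGroup.of i))

/-- The evaluation homomorphism `h_v : L_V →* Γ` at a point `v ∈ V`. -/
def evalAt {Γ : Type} [Group Γ] {d : ℕ} (V : Set (Fin d → Γ)) (v : ↥V) : ↥(LV V) →* Γ :=
  (Pi.evalMonoidHom (fun _ : ↥V => Γ) v).comp (LV V).subtype

/-- A family of homomorphisms `L →* Γ` is discriminating if every finite subset of `L`
is mapped injectively by some member of the family. -/
def IsDiscriminating {Γ L : Type} [Group Γ] [Group L] (H : Set (L →* Γ)) : Prop :=
  ∀ F : Finset L, ∃ h ∈ H, Set.InjOn h (F : Set L)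

/-- A nonempty variety is irreducible if whenever it is a finite union of subvarieties,
one of them is the whole variety. -/
def IsIrreducibleVariety {Γ : Type} [Group Γ] {d : ℕ} (V : Set (Fin d → Γ)) : Prop :=
  IsVariety V ∧ V.Nonempty ∧
    ∀ (n : ℕ) (W : Fin n → Set (Fin d → Γ)),
      (∀ k, IsVariety (W k)) → (∀ k, W k ⊆ V) → V = ⋃ k, W k → ∃ k, W k = V

/-- A map between varieties is algebraic if each of its coordinates is a word map. -/
def IsAlgebraicMap {Γ : Type} [Group Γ] {d d' : ℕ} (V : Set (Fin d → Γ))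
    (V' : Set (Fin d' → Γ)) (F : ↥V → ↥V') : Prop :=
  ∀ i : Fin d', ∃ w : GWord Γ d, ∀ v : ↥V, (F v : Fin d' → Γ) i = evalWord (v : Fin d → Γ) w

/-- A variety is homogeneous if its algebraic automorphisms act transitively. -/
def IsHomogeneous {Γ : Type} [Group Γ] {d : ℕ} (V : Set (Fin d → Γ)) : Prop :=
  ∀ v v' : ↥V, ∃ F : ↥V ≃ ↥V,
    IsAlgebraicMap V V ⇑F ∧ IsAlgebraicMap V V ⇑F.symm ∧ F v = v'

/-- An algebraic group over `Γ`: a nonempty variety `V ⊆ Γ^d` with a group law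
whose coordinates are word maps on `V × V`. -/
structure AlgGroup (Γ : Type) [Group Γ] (d : ℕ) where
  carrier : Set (Fin d → Γ)
  isVariety : IsVariety carrier
  mul : ↥carrier → ↥carrier → ↥carrier
  one : ↥carrier
  inv : ↥carrier → ↥carrier
  mul_assoc : ∀ a b c, mul (mul a b) c = mul a (mul b c)
  one_mul : ∀ a, mul one a = a
  mul_one : ∀ a, mul a one = a
  inv_mul : ∀ a, mul (inv a) a = one
  algebraic : ∀ i : Fin d, ∃ w : GWord Γ (d + d), ∀ a b : ↥carrier,
    (mul a b : Fin d → Γ) i = evalWord (Fin.append (a : Fin d → Γ) (b : Fin d → Γ)) w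

/-- The group structure on the points of an algebraic group. -/
instance AlgGroup.group {Γ : Type} [Group Γ] {d : ℕ} (G : AlgGroup Γ d) :
    Group ↥G.carrier where
  mul := G.mul
  one := G.one
  inv := G.inv
  mul_assoc := G.mul_assoc
  one_mul := G.one_mul
  mul_one := G.mul_one
  inv_mul_cancel := G.inv_mul

/-- The `Γ`-generating set of `L_V` consisting of the coordinate functions, their
inverses, and the nontrivial constants. -/
def LV.genSet {Γ : Type} [Group Γ] {d : ℕ} (V : Set (Fin d → Γ)) : Set ↥(LV V) :=
  {f | (∃ i, f = LV.coord V i ∨ f = (LV.coord V i)⁻¹) ∨ ∃ γ : Γ, γ ≠ 1 ∧ f = LV.const V γ}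

/-- The length of an element of `L_V`: the minimal length of a word in the coordinate
functions, their inverses, and nontrivial constants representing it. -/
noncomputable def LV.len {Γ : Type} [Group Γ] {d : ℕ} (V : Set (Fin d → Γ))
    (f : ↥(LV V)) : ℕ :=
  sInf {n | ∃ l : List ↥(LV V), l.length = n ∧ (∀ g ∈ l, g ∈ LV.genSet V) ∧ l.prod = f}

namespace Stmt18Aux

variable {Γ : Type} [Group Γ] {d : ℕ} (V : Set (Fin d → Γ))

lemma coe_const (γ : Γ) (x : ↥V) : ((LV.const V γ : ↥(LV V)) : ↥V → Γ) x = γ := by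
  show evalWord (x : Fin d → Γ) (Monoid.Coprod.inl γ) = γ
  simp [evalWord]

lemma coe_coord (i : Fin d) (x : ↥V) :
    ((LV.coord V i : ↥(LV V)) : ↥V → Γ) x = (x : Fin d → Γ) i := by
  show evalWord (x : Fin d → Γ) (Monoid.Coprod.inr (FreeGroup.of i)) = _
  simp [evalWord]

lemma genSet_inv {g : ↥(LV V)} (hg : g ∈ LV.genSet V) : g⁻¹ ∈ LV.genSet V := by
  obtain ⟨i, h | h⟩ | ⟨γ, hγ, h⟩ := hg
  · exact Or.inl ⟨i, Or.inr (by rw [h])⟩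
  · exact Or.inl ⟨i, Or.inl (by rw [h, inv_inv])⟩
  · exact Or.inr ⟨γ⁻¹, inv_ne_one.mpr hγ, by rw [h, ← map_inv]⟩

/-- `F : V → Γ` is expressible as a product of at most `n` generators of `L_V`. -/
def Expr (n : ℕ) (F : ↥V → Γ) : Prop :=
  ∃ l : List ↥(LV V), l.length ≤ n ∧ (∀ g ∈ l, g ∈ LV.genSet V) ∧
    ((l.prod : ↥(LV V)) : ↥V → Γ) = F

variable {V}

lemma Expr.mono {n m : ℕ} {F : ↥V → Γ} (h : Expr V n F) (hnm : n ≤ m) : Expr V m F := by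
  obtain ⟨l, h1, h2, h3⟩ := h
  exact ⟨l, h1.trans hnm, h2, h3⟩

lemma Expr.one : Expr V 0 (1 : ↥V → Γ) :=
  ⟨[], le_refl _, by simp, by simp⟩

lemma Expr.mul {n m : ℕ} {F G : ↥V → Γ} (hF : Expr V n F) (hG : Expr V m G) :
    Expr V (n + m) (F * G) := by
  obtain ⟨l1, h1, h2, h3⟩ := hF
  obtain ⟨l2, k1, k2, k3⟩ := hG
  refine ⟨l1 ++ l2, ?_, ?_, ?_⟩
  · simp only [List.length_append]; omega
  · intro g hg; rcases List.mem_append.mp hg with h | h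
    · exact h2 g h
    · exact k2 g h
  · rw [List.prod_append]; push_cast [h3, k3]; rfl

lemma Expr.inv {n : ℕ} {F : ↥V → Γ} (hF : Expr V n F) : Expr V n F⁻¹ := by
  obtain ⟨l, h1, h2, h3⟩ := hF
  refine ⟨(l.map fun x => x⁻¹).reverse, by simpa using h1, ?_, ?_⟩
  · intro g hg
    simp only [List.mem_reverse, List.mem_map] at hg
    obtain ⟨a, ha, rfl⟩ := hg
    exact genSet_inv V (h2 a ha)
  · rw [← List.prod_inv_reverse]; push_cast [h3]; rfl

lemma expr_const (γ : Γ) : Expr V 1 (fun _ : ↥V => γ) := by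
  by_cases hγ : γ = 1
  · subst hγ; exact Expr.one.mono (by norm_num)
  · refine ⟨[LV.const V γ], by simp, ?_, ?_⟩
    · intro g hg; simp only [List.mem_singleton] at hg; subst hg
      exact Or.inr ⟨γ, hγ, rfl⟩
    · rw [List.prod_singleton]; funext x; exact coe_const V γ x

lemma expr_coord (i : Fin d) : Expr V 1 (fun x : ↥V => (x : Fin d → Γ) i) :=
  ⟨[LV.coord V i], by simp, by
    intro g hg; simp only [List.mem_singleton] at hg; subst hg
    exact Or.inl ⟨i, Or.inl rfl⟩,
   by rw [List.prod_singleton]; funext x; exact coe_coord V i x⟩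

/-- Every `(d+d)`-variable word, with the second block of variables substituted by
arbitrary constants, defines a word map expressible by a number of generators
independent of the constants. -/
lemma bdd (w : GWord Γ (d + d)) :
    ∃ n : ℕ, ∀ v : Fin d → Γ,
      Expr V n (fun x : ↥V => evalWord (Fin.append (x : Fin d → Γ) v) w) := by
  induction w using Monoid.Coprod.induction_on with
  | inl γ =>
    refine ⟨1, fun v => ?_⟩
    have : (fun x : ↥V => evalWord (Fin.append (x : Fin d → Γ) v) (Monoid.Coprod.inl γ)) =
        fun _ => γ := by funext x; simp [evalWord]
    rw [this]; exact expr_const γ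
  | inr y =>
    induction y with
    | C1 =>
      refine ⟨0, fun v => ?_⟩
      have : (fun x : ↥V => evalWord (Fin.append (x : Fin d → Γ) v)
          (Monoid.Coprod.inr 1)) = (1 : ↥V → Γ) := by
        funext x; simp
      rw [this]; exact Expr.one
    | of k =>
      refine ⟨1, fun v => ?_⟩
      have : (fun x : ↥V => evalWord (Fin.append (x : Fin d → Γ) v)
          (Monoid.Coprod.inr (FreeGroup.of k))) =
          fun x : ↥V => Fin.append (x : Fin d → Γ) v k := by
        funext x; simp only [evalWord, Monoid.Coprod.lift_apply_inr]; exact FreeGroup.lift_apply_of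
      rw [this]
      induction k using Fin.addCases with
      | left i =>
        have : (fun x : ↥V => Fin.append (x : Fin d → Γ) v (Fin.castAdd d i)) =
            fun x : ↥V => (x : Fin d → Γ) i := by
          funext x; rw [Fin.append_left]
        rw [this]; exact expr_coord i
      | right j =>
        have : (fun x : ↥V => Fin.append (x : Fin d → Γ) v (Fin.natAdd d j)) =
            fun _ : ↥V => v j := by
          funext x; rw [Fin.append_right]
        rw [this]; exact expr_const (v j)
    | inv_of k ih =>
      obtain ⟨n, hn⟩ := ih
      refine ⟨n, fun v => ?_⟩
      have : (fun x : ↥V => evalWord (Fin.append (x : Fin d → Γ) v)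
          (Monoid.Coprod.inr (FreeGroup.of k)⁻¹)) =
          (fun x : ↥V => evalWord (Fin.append (x : Fin d → Γ) v)
            (Monoid.Coprod.inr (FreeGroup.of k)))⁻¹ := by
        funext x; simp
      rw [this]; exact (hn v).inv
    | mul a b iha ihb =>
      obtain ⟨n, hn⟩ := iha
      obtain ⟨m, hm⟩ := ihb
      refine ⟨n + m, fun v => ?_⟩
      have : (fun x : ↥V => evalWord (Fin.append (x : Fin d → Γ) v)
          (Monoid.Coprod.inr (a * b))) =
          (fun x : ↥V => evalWord (Fin.append (x : Fin d → Γ) v) (Monoid.Coprod.inr a)) *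
          (fun x : ↥V => evalWord (Fin.append (x : Fin d → Γ) v) (Monoid.Coprod.inr b)) := by
        funext x; simp
      rw [this]; exact (hn v).mul (hm v)
  | mul a b iha ihb =>
    obtain ⟨n, hn⟩ := iha
    obtain ⟨m, hm⟩ := ihb
    refine ⟨n + m, fun v => ?_⟩
    have : (fun x : ↥V => evalWord (Fin.append (x : Fin d → Γ) v) (a * b)) =
        (fun x : ↥V => evalWord (Fin.append (x : Fin d → Γ) v) a) *
        (fun x : ↥V => evalWord (Fin.append (x : Fin d → Γ) v) b) := by
      funext x; simp
    rw [this]; exact (hn v).mul (hm v)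

/-- Every element of `L_V` is a product of generators. -/
lemma exists_expr (w : GWord Γ d) : ∃ n, Expr V n (wordEval V w) := by
  induction w using Monoid.Coprod.induction_on with
  | inl γ =>
    refine ⟨1, ?_⟩
    have : (wordEval V (Monoid.Coprod.inl γ)) = fun _ : ↥V => γ := by
      funext x; show evalWord (x : Fin d → Γ) (Monoid.Coprod.inl γ) = γ; simp [evalWord]
    rw [this]; exact expr_const γ
  | inr y =>
    induction y with
    | C1 =>
      refine ⟨0, ?_⟩
      have : (wordEval V (Monoid.Coprod.inr 1)) = (1 : ↥V → Γ) := by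
        funext x; show evalWord (x : Fin d → Γ) (Monoid.Coprod.inr 1) = 1; simp
      rw [this]; exact Expr.one
    | of k =>
      refine ⟨1, ?_⟩
      have : (wordEval V (Monoid.Coprod.inr (FreeGroup.of k))) =
          fun x : ↥V => (x : Fin d → Γ) k := by
        funext x
        show evalWord (x : Fin d → Γ) (Monoid.Coprod.inr (FreeGroup.of k)) = _
        simp only [evalWord, Monoid.Coprod.lift_apply_inr]; exact FreeGroup.lift_apply_of
      rw [this]; exact expr_coord k
    | inv_of k ih =>
      obtain ⟨n, hn⟩ := ih
      refine ⟨n, ?_⟩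
      have : (wordEval V (Monoid.Coprod.inr (FreeGroup.of k)⁻¹)) =
          ((wordEval V (Monoid.Coprod.inr (FreeGroup.of k))))⁻¹ := by
        simp
      rw [this]; exact hn.inv
    | mul a b iha ihb =>
      obtain ⟨n, hn⟩ := iha
      obtain ⟨m, hm⟩ := ihb
      refine ⟨n + m, ?_⟩
      have : (wordEval V (Monoid.Coprod.inr (a * b))) =
          (wordEval V (Monoid.Coprod.inr a)) * (wordEval V (Monoid.Coprod.inr b)) := by
        simp
      rw [this]; exact hn.mul hm
  | mul a b iha ihb =>
    obtain ⟨n, hn⟩ := iha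
    obtain ⟨m, hm⟩ := ihb
    refine ⟨n + m, ?_⟩
    have : (wordEval V (a * b)) = (wordEval V a) * (wordEval V b) := by simp
    rw [this]; exact hn.mul hm

end Stmt18Aux


/-- if `L_V` acts by isometries on a metric space `Y` with `Γ` having
bounded orbits, then there is `K` with `‖ρ_v^*(f)‖_Y ≤ K·ℓ(f)` for all `v ∈ V`, `f ∈ L_V`. -/
theorem stmt_18 {Γ : Type} [Group Γ] {d : ℕ} (G : AlgGroup Γ d)
    (Y : Type) [MetricSpace Y] [MulAction ↥(LV G.carrier) Y]
    (hiso : ∀ f : ↥(LV G.carrier), Isometry fun y : Y => f • y)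
    (hbdd : ∀ y : Y,
      Bornology.IsBounded (Set.range fun γ : Γ => LV.const G.carrier γ • y)) :
    ∃ K : ℝ, ∀ (v : ↥G.carrier) (f fρ : ↥(LV G.carrier)),
      ((fρ : ↥G.carrier → Γ) = fun x => (f : ↥G.carrier → Γ) (G.mul x v)) →
      (⨅ y : Y, dist y (fρ • y)) ≤ K * (LV.len G.carrier f : ℝ) := by
  classical
  rcases isEmpty_or_nonempty Y with hY | hY
  · refine ⟨0, fun v f fρ h => ?_⟩
    rw [Real.iInf_of_isEmpty]
    simp
  obtain ⟨y₀⟩ := hY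
  obtain ⟨r, hr⟩ := (Metric.isBounded_iff_subset_closedBall y₀).mp (hbdd y₀)
  set C : ℝ := max r 0 + (∑ i : Fin d, dist y₀ (LV.coord G.carrier i • y₀))
      + (∑ i : Fin d, dist y₀ ((LV.coord G.carrier i)⁻¹ • y₀)) with hCdef
  have hsum1 : (0:ℝ) ≤ ∑ i : Fin d, dist y₀ (LV.coord G.carrier i • y₀) :=
    Finset.sum_nonneg fun i _ => dist_nonneg
  have hsum2 : (0:ℝ) ≤ ∑ i : Fin d, dist y₀ ((LV.coord G.carrier i)⁻¹ • y₀) :=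
    Finset.sum_nonneg fun i _ => dist_nonneg
  have hC0 : 0 ≤ C := by
    have := le_max_right r 0
    rw [hCdef]; linarith
  have hCgen : ∀ g ∈ LV.genSet G.carrier, dist y₀ (g • y₀) ≤ C := by
    intro g hg
    obtain ⟨i, h | h⟩ | ⟨γ, hγ, h⟩ := hg
    · subst h
      have h1 : dist y₀ (LV.coord G.carrier i • y₀) ≤ ∑ j : Fin d, dist y₀ (LV.coord G.carrier j • y₀) :=
        Finset.single_le_sum (f := fun j => dist y₀ (LV.coord G.carrier j • y₀))
          (fun j _ => dist_nonneg) (Finset.mem_univ i)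
      have := le_max_right r 0
      rw [hCdef]; linarith
    · subst h
      have h1 : dist y₀ ((LV.coord G.carrier i)⁻¹ • y₀) ≤
          ∑ j : Fin d, dist y₀ ((LV.coord G.carrier j)⁻¹ • y₀) :=
        Finset.single_le_sum (f := fun j => dist y₀ ((LV.coord G.carrier j)⁻¹ • y₀))
          (fun j _ => dist_nonneg) (Finset.mem_univ i)
      have := le_max_right r 0
      rw [hCdef]; linarith
    · subst h
      have h1 : LV.const G.carrier γ • y₀ ∈ Metric.closedBall y₀ r := hr ⟨γ, rfl⟩
      rw [Metric.mem_closedBall] at h1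
      rw [dist_comm] at h1
      have h2 : r ≤ max r 0 := le_max_left r 0
      rw [hCdef]; linarith
  have key : ∀ l : List ↥(LV G.carrier), (∀ g ∈ l, g ∈ LV.genSet G.carrier) →
      dist y₀ (l.prod • y₀) ≤ C * l.length := by
    intro l
    induction l with
    | nil => intro _; simp
    | cons g l ih =>
      intro hgl
      have h1 := hCgen g (hgl g (by simp))
      have h2 := ih fun a ha => hgl a (by simp [ha])
      calc dist y₀ ((g :: l).prod • y₀) = dist y₀ ((g * l.prod) • y₀) := by
            rw [List.prod_cons]
        _ ≤ dist y₀ (g • y₀) + dist (g • y₀) ((g * l.prod) • y₀) := dist_triangle _ _ _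
        _ = dist y₀ (g • y₀) + dist y₀ (l.prod • y₀) := by
            rw [mul_smul]
            congr 1
            exact (hiso g).dist_eq y₀ (l.prod • y₀)
        _ ≤ C + C * l.length := add_le_add h1 h2
        _ = C * (g :: l).length := by
            simp only [List.length_cons]
            push_cast
            ring
  choose w hw using G.algebraic
  choose n hn using fun i => Stmt18Aux.bdd (V := G.carrier) (w i)
  set M : ℕ := 1 + ∑ i, n i with hM
  have hM1 : 1 ≤ M := Nat.le_add_right 1 _
  have hMi : ∀ i, n i ≤ M := fun i => by
    have : n i ≤ ∑ j, n j :=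
      Finset.single_le_sum (f := n) (fun j _ => Nat.zero_le _) (Finset.mem_univ i)
    omega
  have hgenstep : ∀ v : ↥G.carrier, ∀ g ∈ LV.genSet G.carrier,
      Stmt18Aux.Expr G.carrier M (fun x : ↥G.carrier => (g : ↥G.carrier → Γ) (G.mul x v)) := by
    intro v g hg
    obtain ⟨i, h | h⟩ | ⟨γ, hγ, h⟩ := hg
    · subst h
      have heq : (fun x : ↥G.carrier => ((LV.coord G.carrier i : ↥(LV G.carrier)) : ↥G.carrier → Γ) (G.mul x v)) =
          fun x : ↥G.carrier => evalWord (Fin.append ((x : Fin d → Γ)) ((v : Fin d → Γ))) (w i) := by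
        funext x
        rw [Stmt18Aux.coe_coord]
        exact hw i x v
      rw [heq]
      exact (hn i (v : Fin d → Γ)).mono (hMi i)
    · subst h
      have heq : (fun x : ↥G.carrier => (((LV.coord G.carrier i)⁻¹ : ↥(LV G.carrier)) : ↥G.carrier → Γ) (G.mul x v)) =
          (fun x : ↥G.carrier =>
            evalWord (Fin.append ((x : Fin d → Γ)) ((v : Fin d → Γ))) (w i))⁻¹ := by
        funext x
        have : (((LV.coord G.carrier i)⁻¹ : ↥(LV G.carrier)) : ↥G.carrier → Γ) (G.mul x v) =
            (((LV.coord G.carrier i : ↥(LV G.carrier)) : ↥G.carrier → Γ) (G.mul x v))⁻¹ := by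
          simp
        rw [this, Stmt18Aux.coe_coord, hw i x v]
        rfl
      rw [heq]
      exact ((hn i (v : Fin d → Γ)).inv).mono (hMi i)
    · subst h
      have heq : (fun x : ↥G.carrier => ((LV.const G.carrier γ : ↥(LV G.carrier)) : ↥G.carrier → Γ) (G.mul x v)) =
          fun _ : ↥G.carrier => γ := by
        funext x
        exact Stmt18Aux.coe_const G.carrier γ _
      rw [heq]
      exact (Stmt18Aux.expr_const γ).mono hM1
  have hlist : ∀ v : ↥G.carrier, ∀ l : List ↥(LV G.carrier), (∀ g ∈ l, g ∈ LV.genSet G.carrier) →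
      Stmt18Aux.Expr G.carrier (M * l.length)
        (fun x : ↥G.carrier => ((l.prod : ↥(LV G.carrier)) : ↥G.carrier → Γ) (G.mul x v)) := by
    intro v l
    induction l with
    | nil =>
      intro _
      have heq : (fun x : ↥G.carrier => ((([] : List ↥(LV G.carrier)).prod : ↥(LV G.carrier)) : ↥G.carrier → Γ) (G.mul x v))
          = (1 : ↥G.carrier → Γ) := by
        funext x; simp
      rw [heq]
      exact Stmt18Aux.Expr.one.mono (Nat.zero_le _)
    | cons g l ih =>
      intro hgl
      have heq : (fun x : ↥G.carrier => (((g :: l).prod : ↥(LV G.carrier)) : ↥G.carrier → Γ) (G.mul x v)) =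
          (fun x : ↥G.carrier => (g : ↥G.carrier → Γ) (G.mul x v)) *
          (fun x : ↥G.carrier => ((l.prod : ↥(LV G.carrier)) : ↥G.carrier → Γ) (G.mul x v)) := by
        funext x
        simp [List.prod_cons]
      rw [heq]
      have := (hgenstep v g (hgl g (by simp))).mul (ih fun a ha => hgl a (by simp [ha]))
      refine this.mono (le_of_eq ?_)
      simp only [List.length_cons]
      ring
  refine ⟨C * M, fun v f fρ h => ?_⟩
  have hne : {m | ∃ l : List ↥(LV G.carrier), l.length = m ∧ (∀ g ∈ l, g ∈ LV.genSet G.carrier) ∧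
      l.prod = f}.Nonempty := by
    obtain ⟨wf, hwf⟩ := f.2
    obtain ⟨n0, l0, _, hg0, hp0⟩ := Stmt18Aux.exists_expr (V := G.carrier) wf
    exact ⟨l0.length, l0, rfl, hg0, Subtype.ext (hp0.trans hwf)⟩
  obtain ⟨l₀, hlen, hgens, hprod⟩ := Nat.sInf_mem hne
  have hexpr := hlist v l₀ hgens
  rw [hprod] at hexpr
  rw [← h] at hexpr
  obtain ⟨l', hl'len, hl'gens, hl'prod⟩ := hexpr
  have hfρ : l'.prod = fρ := Subtype.ext hl'prod
  have hd := key l' hl'gens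
  rw [hfρ] at hd
  have hInf : (⨅ y : Y, dist y (fρ • y)) ≤ dist y₀ (fρ • y₀) := by
    apply ciInf_le
    refine ⟨0, fun z hz => ?_⟩
    obtain ⟨y, rfl⟩ := hz
    exact dist_nonneg
  have hlenf : l₀.length = LV.len G.carrier f := hlen
  calc (⨅ y : Y, dist y (fρ • y)) ≤ dist y₀ (fρ • y₀) := hInf
    _ ≤ C * l'.length := hd
    _ ≤ C * (M * l₀.length : ℕ) := by
        apply mul_le_mul_of_nonneg_left _ hC0
        exact_mod_cast hl'len
    _ = (C * M) * (l₀.length : ℝ) := by push_cast; ring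
    _ = (C * M) * (LV.len G.carrier f : ℝ) := by rw [hlenf]
end

section
/- Let Γ be a group and (V, μ) an algebraic group over Γ, V ⊆ Γ^d. Suppose L_V acts by isometries on a metric space Y in such a way that the constants subgroup Γ ⊆ L_V has bounded orbits. Then for every f ∈ L_V there exists a constant C_f such that for all a, b ∈ V, the translation length satisfies ||Δ_{a,b}^*(f)||_Y ≤ C_f, where Δ_{a,b} : V → V is the map v ↦ a ⊛ v ⊛ b and Δ_{a,b}^*(f) = f ∘ Δ_{a,b}. -/
namespace Stmt19Aux

open Monoid Monoid.Coprod

variable {Γ : Type} [Group Γ] {d : ℕ}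

@[simp] lemma evalWord_inl (v : Fin d → Γ) (γ : Γ) :
    evalWord v (Monoid.Coprod.inl γ) = γ := by
  simp [evalWord]

@[simp] lemma evalWord_inr_of (v : Fin d → Γ) (i : Fin d) :
    evalWord v (Monoid.Coprod.inr (FreeGroup.of i)) = v i := by
  simp [evalWord]

/-- A word computing coordinate `i` of the multiplication of `G`. -/
noncomputable def mulWord (G : AlgGroup Γ d) (i : Fin d) : GWord Γ (d + d) :=
  (G.algebraic i).choose

lemma mulWord_spec (G : AlgGroup Γ d) (i : Fin d) (a b : ↥G.carrier) :
    (G.mul a b : Fin d → Γ) i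
      = evalWord (Fin.append (a : Fin d → Γ) (b : Fin d → Γ)) (mulWord G i) :=
  (G.algebraic i).choose_spec a b

/-- Substitute the constants `a` for the first `d` variables. -/
def leftSub (a : Fin d → Γ) : GWord Γ (d + d) →* GWord Γ d :=
  Monoid.Coprod.lift Monoid.Coprod.inl (FreeGroup.lift fun j =>
    Fin.addCases (motive := fun _ => GWord Γ d)
      (fun j₁ => Monoid.Coprod.inl (a j₁))
      (fun j₂ => Monoid.Coprod.inr (FreeGroup.of j₂)) j)

/-- Substitute the constants `b` for the last `d` variables. -/
def rightSub (b : Fin d → Γ) : GWord Γ (d + d) →* GWord Γ d :=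
  Monoid.Coprod.lift Monoid.Coprod.inl (FreeGroup.lift fun j =>
    Fin.addCases (motive := fun _ => GWord Γ d)
      (fun j₁ => Monoid.Coprod.inr (FreeGroup.of j₁))
      (fun j₂ => Monoid.Coprod.inl (b j₂)) j)

@[simp] lemma leftSub_inl (a : Fin d → Γ) (γ : Γ) :
    leftSub a (Monoid.Coprod.inl γ) = Monoid.Coprod.inl γ := by
  simp [leftSub]

@[simp] lemma leftSub_inr_of_left (a : Fin d → Γ) (j : Fin d) :
    leftSub a (Monoid.Coprod.inr (FreeGroup.of (Fin.castAdd d j)))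
      = Monoid.Coprod.inl (a j) := by
  simp [leftSub]

@[simp] lemma leftSub_inr_of_right (a : Fin d → Γ) (j : Fin d) :
    leftSub a (Monoid.Coprod.inr (FreeGroup.of (Fin.natAdd d j)))
      = Monoid.Coprod.inr (FreeGroup.of j) := by
  rw [leftSub, Monoid.Coprod.lift_apply_inr, FreeGroup.lift_apply_of, Fin.addCases_right]

@[simp] lemma rightSub_inl (b : Fin d → Γ) (γ : Γ) :
    rightSub b (Monoid.Coprod.inl γ) = Monoid.Coprod.inl γ := by
  simp [rightSub]

@[simp] lemma rightSub_inr_of_left (b : Fin d → Γ) (j : Fin d) :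
    rightSub b (Monoid.Coprod.inr (FreeGroup.of (Fin.castAdd d j)))
      = Monoid.Coprod.inr (FreeGroup.of j) := by
  simp [rightSub]

@[simp] lemma rightSub_inr_of_right (b : Fin d → Γ) (j : Fin d) :
    rightSub b (Monoid.Coprod.inr (FreeGroup.of (Fin.natAdd d j)))
      = Monoid.Coprod.inl (b j) := by
  rw [rightSub, Monoid.Coprod.lift_apply_inr, FreeGroup.lift_apply_of, Fin.addCases_right]

lemma eval_leftSub (a v : Fin d → Γ) :
    (evalWord v).comp (leftSub a) = evalWord (Fin.append a v) := by
  apply Monoid.Coprod.hom_ext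
  · ext γ
    simp
  · ext j
    refine Fin.addCases (motive := fun j =>
      ((evalWord v).comp (leftSub a)).comp Monoid.Coprod.inr (FreeGroup.of j)
        = (evalWord (Fin.append a v)).comp Monoid.Coprod.inr (FreeGroup.of j)) ?_ ?_ j
    · intro j'
      simp only [MonoidHom.comp_apply]
      rw [leftSub_inr_of_left, evalWord_inl, evalWord_inr_of, Fin.append_left]
    · intro j'
      simp only [MonoidHom.comp_apply]
      rw [leftSub_inr_of_right, evalWord_inr_of, evalWord_inr_of, Fin.append_right]

lemma eval_rightSub (b v : Fin d → Γ) :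
    (evalWord v).comp (rightSub b) = evalWord (Fin.append v b) := by
  apply Monoid.Coprod.hom_ext
  · ext γ
    simp
  · ext j
    refine Fin.addCases (motive := fun j =>
      ((evalWord v).comp (rightSub b)).comp Monoid.Coprod.inr (FreeGroup.of j)
        = (evalWord (Fin.append v b)).comp Monoid.Coprod.inr (FreeGroup.of j)) ?_ ?_ j
    · intro j'
      simp only [MonoidHom.comp_apply]
      rw [rightSub_inr_of_left, evalWord_inr_of, evalWord_inr_of, Fin.append_left]
    · intro j'
      simp only [MonoidHom.comp_apply]
      rw [rightSub_inr_of_right, evalWord_inl, evalWord_inr_of, Fin.append_right]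

/-- Substitute the word maps `v ↦ (a ⊛ v)_j` for the variables. -/
noncomputable def innerSub (G : AlgGroup Γ d) (a : ↥G.carrier) : GWord Γ d →* GWord Γ d :=
  Monoid.Coprod.lift Monoid.Coprod.inl
    (FreeGroup.lift fun j => leftSub (a : Fin d → Γ) (mulWord G j))

@[simp] lemma innerSub_inl (G : AlgGroup Γ d) (a : ↥G.carrier) (γ : Γ) :
    innerSub G a (Monoid.Coprod.inl γ) = Monoid.Coprod.inl γ := by
  simp [innerSub]

@[simp] lemma innerSub_inr_of (G : AlgGroup Γ d) (a : ↥G.carrier) (j : Fin d) :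
    innerSub G a (Monoid.Coprod.inr (FreeGroup.of j))
      = leftSub (a : Fin d → Γ) (mulWord G j) := by
  simp [innerSub]

lemma eval_innerSub (G : AlgGroup Γ d) (a v : ↥G.carrier) :
    (evalWord (v : Fin d → Γ)).comp (innerSub G a)
      = evalWord (G.mul a v : Fin d → Γ) := by
  apply Monoid.Coprod.hom_ext
  · ext γ
    simp
  · ext j
    have h1 := DFunLike.congr_fun (eval_leftSub (a : Fin d → Γ) (v : Fin d → Γ)) (mulWord G j)
    simp only [MonoidHom.comp_apply] at h1 ⊢
    rw [innerSub_inr_of, h1, evalWord_inr_of, mulWord_spec G j a v]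

/-- Substitute the word maps `v ↦ ((a ⊛ v) ⊛ b)_i` for the variables. -/
noncomputable def subst (G : AlgGroup Γ d) (a b : ↥G.carrier) : GWord Γ d →* GWord Γ d :=
  Monoid.Coprod.lift Monoid.Coprod.inl
    (FreeGroup.lift fun i => innerSub G a (rightSub (b : Fin d → Γ) (mulWord G i)))

@[simp] lemma subst_inl (G : AlgGroup Γ d) (a b : ↥G.carrier) (γ : Γ) :
    subst G a b (Monoid.Coprod.inl γ) = Monoid.Coprod.inl γ := by
  simp [subst]

@[simp] lemma subst_inr_of (G : AlgGroup Γ d) (a b : ↥G.carrier) (i : Fin d) :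
    subst G a b (Monoid.Coprod.inr (FreeGroup.of i))
      = innerSub G a (rightSub (b : Fin d → Γ) (mulWord G i)) := by
  simp [subst]

lemma eval_subst (G : AlgGroup Γ d) (a b v : ↥G.carrier) :
    (evalWord (v : Fin d → Γ)).comp (subst G a b)
      = evalWord (G.mul (G.mul a v) b : Fin d → Γ) := by
  apply Monoid.Coprod.hom_ext
  · ext γ
    simp
  · ext i
    have h1 := DFunLike.congr_fun (eval_innerSub G a v)
      (rightSub (b : Fin d → Γ) (mulWord G i))
    have h2 := DFunLike.congr_fun
      (eval_rightSub (b : Fin d → Γ) (G.mul a v : Fin d → Γ)) (mulWord G i)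
    simp only [MonoidHom.comp_apply] at h1 h2 ⊢
    rw [subst_inr_of, h1, h2, evalWord_inr_of, mulWord_spec G i (G.mul a v) b]

end Stmt19Aux

/-- if `L_V` acts by isometries on a metric space `Y` with `Γ` having
bounded orbits, then for each `f ∈ L_V` there is `C_f` with `‖Δ_{a,b}^*(f)‖_Y ≤ C_f`
for all `a, b ∈ V`, where `Δ_{a,b} : v ↦ a ⊛ v ⊛ b`. -/
theorem stmt_19 {Γ : Type} [Group Γ] {d : ℕ} (G : AlgGroup Γ d)
    (Y : Type) [MetricSpace Y] [MulAction ↥(LV G.carrier) Y]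
    (hiso : ∀ f : ↥(LV G.carrier), Isometry fun y : Y => f • y)
    (hbdd : ∀ y : Y,
      Bornology.IsBounded (Set.range fun γ : Γ => LV.const G.carrier γ • y))
    (f : ↥(LV G.carrier)) :
    ∃ C : ℝ, ∀ (a b : ↥G.carrier) (fΔ : ↥(LV G.carrier)),
      ((fΔ : ↥G.carrier → Γ) =
        fun v => (f : ↥G.carrier → Γ) (G.mul (G.mul a v) b)) →
      (⨅ y : Y, dist y (fΔ • y)) ≤ C := by
  classical
  cases isEmpty_or_nonempty Y with
  | inl hY =>
    exact ⟨0, fun a b fΔ _ => le_of_eq (Real.iInf_of_isEmpty _)⟩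
  | inr hY =>
    open Stmt19Aux in
    obtain ⟨y0⟩ := hY
    obtain ⟨K, hK⟩ := (hbdd y0).subset_closedBall y0
    set D : ↥(LV G.carrier) → ℝ := fun g => dist y0 (g • y0) with hD
    have hD1 : D 1 = 0 := by simp [hD, one_smul]
    have hDmul : ∀ g h : ↥(LV G.carrier), D (g * h) ≤ D g + D h := by
      intro g h
      have : dist (g • y0) ((g * h) • y0) = dist y0 (h • y0) := by
        rw [mul_smul]
        exact ((hiso g).dist_eq _ _)
      calc dist y0 ((g * h) • y0) ≤ dist y0 (g • y0) + dist (g • y0) ((g * h) • y0) :=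
            dist_triangle _ _ _
        _ = D g + D h := by rw [this]
    have hDinv : ∀ g : ↥(LV G.carrier), D g⁻¹ = D g := by
      intro g
      have : dist (g • y0) (g • g⁻¹ • y0) = dist y0 (g⁻¹ • y0) := (hiso g).dist_eq _ _
      rw [hD]
      simp only
      rw [← this, smul_inv_smul, dist_comm]
    set R : GWord Γ d →* ↥(LV G.carrier) := (wordEval G.carrier).rangeRestrict with hR
    have hDconst : ∀ γ : Γ, D (R (Monoid.Coprod.inl γ)) ≤ K := by
      intro γ
      have : LV.const G.carrier γ • y0 ∈ Metric.closedBall y0 K := hK ⟨γ, rfl⟩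
      rw [Metric.mem_closedBall] at this
      have he : R (Monoid.Coprod.inl γ) = LV.const G.carrier γ := rfl
      rw [hD]
      simp only [he]
      rwa [dist_comm]
    have hK0 : (0 : ℝ) ≤ K := le_trans dist_nonneg (hDconst 1)
    -- claim 3 : uniform bound for leftSub
    have claim3 : ∀ u : GWord Γ (d + d),
        ∃ C : ℝ, ∀ a : ↥G.carrier, D (R (leftSub (a : Fin d → Γ) u)) ≤ C := by
      intro u
      induction u using Monoid.Coprod.induction_on with
      | inl γ =>
        exact ⟨K, fun a => by rw [leftSub_inl]; exact hDconst γ⟩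
      | inr n =>
        induction n using FreeGroup.induction_on with
        | C1 =>
          refine ⟨0, fun a => ?_⟩
          simp only [map_one]; rw [hD1]
        | of j =>
          refine Fin.addCases (motive := fun j => ∃ C : ℝ, ∀ a : ↥G.carrier,
            D (R (leftSub (a : Fin d → Γ) (Monoid.Coprod.inr (FreeGroup.of j)))) ≤ C)
            ?_ ?_ j
          · intro j₁
            exact ⟨K, fun a => by rw [leftSub_inr_of_left]; exact hDconst _⟩
          · intro j₂
            refine ⟨D (R (Monoid.Coprod.inr (FreeGroup.of j₂))), fun a => ?_⟩
            rw [leftSub_inr_of_right]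
        | inv_of j ih =>
          obtain ⟨C, hC⟩ := ih
          refine ⟨C, fun a => ?_⟩
          have : (Monoid.Coprod.inr ((FreeGroup.of j : FreeGroup (Fin (d + d)))⁻¹) : GWord Γ (d + d))
              = (Monoid.Coprod.inr (FreeGroup.of j : FreeGroup (Fin (d + d))))⁻¹ := map_inv _ _
          rw [this]; simp only [map_inv]; rw [hDinv]
          exact hC a
        | mul x y ihx ihy =>
          obtain ⟨Cx, hCx⟩ := ihx
          obtain ⟨Cy, hCy⟩ := ihy
          refine ⟨Cx + Cy, fun a => ?_⟩
          simp only [map_mul]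
          exact le_trans (hDmul _ _) (add_le_add (hCx a) (hCy a))
      | mul x y ihx ihy =>
        obtain ⟨Cx, hCx⟩ := ihx
        obtain ⟨Cy, hCy⟩ := ihy
        refine ⟨Cx + Cy, fun a => ?_⟩
        simp only [map_mul]
        exact le_trans (hDmul _ _) (add_le_add (hCx a) (hCy a))
    -- claim 2 : uniform bound for innerSub ∘ rightSub
    have claim2 : ∀ u : GWord Γ (d + d),
        ∃ C : ℝ, ∀ a b : ↥G.carrier,
          D (R (innerSub G a (rightSub (b : Fin d → Γ) u))) ≤ C := by
      intro u
      induction u using Monoid.Coprod.induction_on with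
      | inl γ =>
        exact ⟨K, fun a b => by rw [rightSub_inl, innerSub_inl]; exact hDconst γ⟩
      | inr n =>
        induction n using FreeGroup.induction_on with
        | C1 =>
          refine ⟨0, fun a b => ?_⟩
          simp only [map_one]; rw [hD1]
        | of j =>
          refine Fin.addCases (motive := fun j => ∃ C : ℝ, ∀ a b : ↥G.carrier,
            D (R (innerSub G a (rightSub (b : Fin d → Γ)
              (Monoid.Coprod.inr (FreeGroup.of j))))) ≤ C) ?_ ?_ j
          · intro j₁
            obtain ⟨C, hC⟩ := claim3 (mulWord G j₁)
            refine ⟨C, fun a b => ?_⟩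
            rw [rightSub_inr_of_left, innerSub_inr_of]
            exact hC a
          · intro j₂
            refine ⟨K, fun a b => ?_⟩
            rw [rightSub_inr_of_right, innerSub_inl]
            exact hDconst _
        | inv_of j ih =>
          obtain ⟨C, hC⟩ := ih
          refine ⟨C, fun a b => ?_⟩
          have : (Monoid.Coprod.inr ((FreeGroup.of j : FreeGroup (Fin (d + d)))⁻¹) : GWord Γ (d + d))
              = (Monoid.Coprod.inr (FreeGroup.of j : FreeGroup (Fin (d + d))))⁻¹ := map_inv _ _
          rw [this]; simp only [map_inv]; rw [hDinv]
          exact hC a b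
        | mul x y ihx ihy =>
          obtain ⟨Cx, hCx⟩ := ihx
          obtain ⟨Cy, hCy⟩ := ihy
          refine ⟨Cx + Cy, fun a b => ?_⟩
          simp only [map_mul]
          exact le_trans (hDmul _ _) (add_le_add (hCx a b) (hCy a b))
      | mul x y ihx ihy =>
        obtain ⟨Cx, hCx⟩ := ihx
        obtain ⟨Cy, hCy⟩ := ihy
        refine ⟨Cx + Cy, fun a b => ?_⟩
        simp only [map_mul]
        exact le_trans (hDmul _ _) (add_le_add (hCx a b) (hCy a b))
    -- claim 1 : uniform bound for subst
    have claim1 : ∀ w : GWord Γ d,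
        ∃ C : ℝ, ∀ a b : ↥G.carrier, D (R (subst G a b w)) ≤ C := by
      intro w
      induction w using Monoid.Coprod.induction_on with
      | inl γ =>
        exact ⟨K, fun a b => by rw [subst_inl]; exact hDconst γ⟩
      | inr n =>
        induction n using FreeGroup.induction_on with
        | C1 =>
          refine ⟨0, fun a b => ?_⟩
          simp only [map_one]; rw [hD1]
        | of i =>
          obtain ⟨C, hC⟩ := claim2 (mulWord G i)
          refine ⟨C, fun a b => ?_⟩
          rw [show (Monoid.Coprod.inr (FreeGroup.of i) : GWord Γ d)
            = Monoid.Coprod.inr (FreeGroup.of i) from rfl, subst_inr_of]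
          exact hC a b
        | inv_of i ih =>
          obtain ⟨C, hC⟩ := ih
          refine ⟨C, fun a b => ?_⟩
          have : (Monoid.Coprod.inr ((FreeGroup.of i : FreeGroup (Fin d))⁻¹) : GWord Γ d)
              = (Monoid.Coprod.inr (FreeGroup.of i : FreeGroup (Fin d)))⁻¹ := map_inv _ _
          rw [this]; simp only [map_inv]; rw [hDinv]
          exact hC a b
        | mul x y ihx ihy =>
          obtain ⟨Cx, hCx⟩ := ihx
          obtain ⟨Cy, hCy⟩ := ihy
          refine ⟨Cx + Cy, fun a b => ?_⟩
          simp only [map_mul]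
          exact le_trans (hDmul _ _) (add_le_add (hCx a b) (hCy a b))
      | mul x y ihx ihy =>
        obtain ⟨Cx, hCx⟩ := ihx
        obtain ⟨Cy, hCy⟩ := ihy
        refine ⟨Cx + Cy, fun a b => ?_⟩
        simp only [map_mul]
        exact le_trans (hDmul _ _) (add_le_add (hCx a b) (hCy a b))
    obtain ⟨w, hw⟩ := MonoidHom.mem_range.mp f.2
    obtain ⟨C, hC⟩ := claim1 w
    refine ⟨C, fun a b fΔ hfΔ => ?_⟩
    have hfΔ' : fΔ = R (subst G a b w) := by
      apply Subtype.ext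
      rw [hfΔ]
      funext v
      have := DFunLike.congr_fun (eval_subst G a b v) w
      simp only [MonoidHom.comp_apply] at this
      calc (↑f : ↥G.carrier → Γ) (G.mul (G.mul a v) b)
          = wordEval G.carrier w (G.mul (G.mul a v) b) := by rw [hw]
        _ = evalWord (↑(G.mul (G.mul a v) b) : Fin d → Γ) w := rfl
        _ = evalWord (↑v : Fin d → Γ) (subst G a b w) := this.symm
        _ = (↑(R (subst G a b w)) : ↥G.carrier → Γ) v := rfl
    have hbd : BddBelow (Set.range fun y : Y => dist y (fΔ • y)) := by
      refine ⟨0, fun x hx => ?_⟩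
      obtain ⟨y, rfl⟩ := hx
      exact dist_nonneg
    calc (⨅ y : Y, dist y (fΔ • y)) ≤ dist y0 (fΔ • y0) := ciInf_le hbd y0
      _ ≤ C := by rw [hfΔ']; exact hC a b
end
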